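/- arXiv:1707.07384 — 5 statements merged into one kernel-verified Lean document; each statement's English description precedes it below -/
import Mathlib

section
/- Let S : L²(I) → L²(I) be continuous, linear and injective, w_d, f ∈ L²(I), ν, η > 0, and U_ad a nonempty closed convex bounded subset of L²(I). Then the problem of minimizing J(u) = ½‖S(f+u) − w_d‖²_{L²} + (ν/2)‖u‖²_{L²} + (η/2)‖u‖_{L¹} over U_ad has a unique solution. -/
/-!
`J` is `ν`-strongly convex: the tracking term is the square of a norm of an affine map and
`u ↦ ∫ |u|` is convex, so subtracting `(ν/2)‖u‖²` leaves a convex function. By the midpoint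
inequality of strong convexity, any minimizing sequence in the closed convex set `U_ad` is Cauchy;
its limit is a minimizer because `J` is continuous (the `L¹` term is Lipschitz on `L²` of a finite
measure), and strict convexity makes it unique.
-/

open MeasureTheory Set Filter Topology

lemma LowerSemicontinuousWithinAt.le_of_tendsto {α ι γ : Type*} [TopologicalSpace α]
    [LinearOrder γ] [TopologicalSpace γ] [OrderTopology γ] [DenselyOrdered γ] {f : α → γ}
    {s : Set α} {x : α} (hf : LowerSemicontinuousWithinAt f s x) {l : Filter ι} [l.NeBot]
    {u : ι → α} (hu : Tendsto u l (𝓝[s] x)) {c : γ} (hfu : Tendsto (fun n ↦ f (u n)) l (𝓝 c)) :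
    f x ≤ c := by
  by_contra! hlt
  obtain ⟨y, hcy, hyx⟩ := exists_between hlt
  obtain ⟨n, hyn, hny⟩ :=
    ((hu.eventually (hf y hyx)).and (hfu.eventually (gt_mem_nhds hcy))).exists
  exact lt_asymm hyn hny

section StrongConvexity

variable {E : Type*} [NormedAddCommGroup E] [NormedSpace ℝ E] {s : Set E} {m : ℝ} {f : E → ℝ}

lemma StrongConvexOn.midpoint_le (hf : StrongConvexOn s m f) {x y : E} (hx : x ∈ s) (hy : y ∈ s) :
    f ((2⁻¹ : ℝ) • x + (2⁻¹ : ℝ) • y) ≤ 2⁻¹ * f x + 2⁻¹ * f y - m / 8 * ‖x - y‖ ^ 2 := by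
  have h := hf.2 hx hy (by norm_num : (0 : ℝ) ≤ 2⁻¹) (by norm_num : (0 : ℝ) ≤ 2⁻¹) (by norm_num)
  simp only [smul_eq_mul] at h
  linarith

lemma StrongConvexOn.cauchySeq_of_tendsto (hf : StrongConvexOn s m f) (hm : 0 < m) {c : ℝ}
    (hc : ∀ x ∈ s, c ≤ f x) {u : ℕ → E} (hu : ∀ n, u n ∈ s)
    (hlim : Tendsto (fun n ↦ f (u n)) atTop (𝓝 c)) : CauchySeq u := by
  have hdist : ∀ i j, m / 4 * ‖u i - u j‖ ^ 2 ≤ (f (u i) - c) + (f (u j) - c) := fun i j ↦ by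
    have := hf.midpoint_le (hu i) (hu j)
    have := hc _ <| hf.1 (hu i) (hu j) (by norm_num : (0 : ℝ) ≤ 2⁻¹) (by norm_num : (0 : ℝ) ≤ 2⁻¹)
      (by norm_num)
    linarith
  refine Metric.cauchySeq_iff.2 fun ε hε ↦ ?_
  obtain ⟨N, hN⟩ := eventually_atTop.1 <|
    hlim.eventually (gt_mem_nhds (lt_add_of_pos_right c (by positivity : 0 < m * ε ^ 2 / 8)))
  refine ⟨N, fun i hi j hj ↦ ?_⟩
  have hsq : ‖u i - u j‖ ^ 2 < ε ^ 2 := by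
    have := hdist i j
    have := hN i hi
    have := hN j hj
    nlinarith
  rw [dist_eq_norm]
  exact lt_of_pow_lt_pow_left₀ 2 hε.le hsq

theorem StrongConvexOn.existsUnique_isMinOn [CompleteSpace E] (hf : StrongConvexOn s m f)
    (hm : 0 < m) (hs : s.Nonempty) (hsc : IsClosed s) (hfc : LowerSemicontinuousOn f s)
    (hbdd : BddBelow (f '' s)) : ∃! x, x ∈ s ∧ ∀ y ∈ s, f x ≤ f y := by
  have hinf : ∀ y ∈ s, sInf (f '' s) ≤ f y := fun y hy ↦ csInf_le hbdd (mem_image_of_mem f hy)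
  obtain ⟨a, -, ha, has⟩ := exists_seq_tendsto_sInf (hs.image f) hbdd
  choose u hu hfu using has
  have hlim : Tendsto (fun n ↦ f (u n)) atTop (𝓝 (sInf (f '' s))) := by simpa only [hfu] using ha
  obtain ⟨x, hx⟩ := cauchySeq_tendsto_of_complete (hf.cauchySeq_of_tendsto hm hinf hu hlim)
  have hxs : x ∈ s := hsc.mem_of_tendsto hx (Eventually.of_forall hu)
  have hfx : f x ≤ sInf (f '' s) :=
    LowerSemicontinuousWithinAt.le_of_tendsto (hfc x hxs)
      (tendsto_nhdsWithin_iff.2 ⟨hx, Eventually.of_forall hu⟩) hlim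
  refine ⟨x, ⟨hxs, fun y hy ↦ hfx.trans (hinf y hy)⟩, fun y ⟨hys, hy⟩ ↦ ?_⟩
  exact (hf.strictConvexOn hm).eq_of_isMinOn (isMinOn_iff.2 hy)
    (isMinOn_iff.2 fun z hz ↦ hfx.trans (hinf z hz)) hys hxs

end StrongConvexity

namespace MeasureTheory.Lp

variable {α : Type*} [MeasurableSpace α] {μ : Measure α} [IsFiniteMeasure μ] {p : ENNReal}
  [Fact (1 ≤ p)]

lemma integrable_abs (u : Lp ℝ p μ) : Integrable (fun x ↦ |u x|) μ :=
  ((Lp.memLp u).integrable Fact.out).abs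

lemma convexOn_integral_abs : ConvexOn ℝ univ fun u : Lp ℝ p μ ↦ ∫ x, |u x| ∂μ := by
  refine ⟨convex_univ, fun u _ v _ a b ha hb _ ↦ ?_⟩
  simp only [smul_eq_mul]
  rw [← integral_const_mul, ← integral_const_mul,
    ← integral_add ((integrable_abs u).const_mul a) ((integrable_abs v).const_mul b)]
  refine integral_mono_ae (integrable_abs _)
    (((integrable_abs u).const_mul a).add ((integrable_abs v).const_mul b)) ?_
  filter_upwards [Lp.coeFn_add (a • u) (b • v), Lp.coeFn_smul a u, Lp.coeFn_smul b v]
    with x hadd hau hbv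
  simp only [hadd, Pi.add_apply, hau, hbv, Pi.smul_apply, smul_eq_mul]
  calc |a * u x + b * v x| ≤ |a * u x| + |b * v x| := abs_add_le _ _
    _ = a * |u x| + b * |v x| := by rw [abs_mul, abs_mul, abs_of_nonneg ha, abs_of_nonneg hb]

lemma integral_abs_le_mul_norm (u : Lp ℝ p μ) :
    ∫ x, |u x| ∂μ ≤ μ.real univ ^ (1 - 1 / p.toReal) * ‖u‖ := by
  have hL1 : ∫ x, |u x| ∂μ = (eLpNorm u 1 μ).toReal := by
    simp_rw [← Real.norm_eq_abs]
    rw [integral_norm_eq_lintegral_enorm (Lp.aestronglyMeasurable u),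
      eLpNorm_one_eq_lintegral_enorm]
  have hle := eLpNorm_le_eLpNorm_mul_rpow_measure_univ (Fact.out : 1 ≤ p)
    (Lp.aestronglyMeasurable u)
  rw [ENNReal.toReal_one, div_one] at hle
  have hexp : 0 ≤ 1 - 1 / p.toReal := by
    rcases eq_or_ne p ⊤ with rfl | hp
    · simp
    · have hp1 : 1 ≤ p.toReal := by simpa using ENNReal.toReal_mono hp (Fact.out : 1 ≤ p)
      exact sub_nonneg.2 <| div_le_one_of_le₀ hp1 ENNReal.toReal_nonneg
  have hfin : eLpNorm u p μ * μ univ ^ (1 - 1 / p.toReal) ≠ ⊤ :=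
    ENNReal.mul_ne_top (Lp.eLpNorm_ne_top u)
      (ENNReal.rpow_ne_top_of_nonneg hexp (measure_ne_top μ _))
  rw [hL1, Lp.norm_def, mul_comm, measureReal_def, ENNReal.toReal_rpow, ← ENNReal.toReal_mul]
  exact ENNReal.toReal_mono hfin hle

lemma abs_integral_abs_sub_le (u v : Lp ℝ p μ) :
    |∫ x, |u x| ∂μ - ∫ x, |v x| ∂μ| ≤ ∫ x, |(u - v) x| ∂μ := by
  rw [← integral_sub (integrable_abs u) (integrable_abs v)]
  refine (abs_integral_le_integral_abs).trans (integral_mono_ae ((integrable_abs u).sub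
    (integrable_abs v)).abs (integrable_abs _) ?_)
  filter_upwards [Lp.coeFn_sub u v] with x hx
  simpa only [hx, Pi.sub_apply] using abs_abs_sub_abs_le_abs_sub (u x) (v x)

lemma continuous_integral_abs : Continuous fun u : Lp ℝ p μ ↦ ∫ x, |u x| ∂μ := by
  refine (LipschitzWith.of_dist_le_mul (K := (μ.real univ ^ (1 - 1 / p.toReal)).toNNReal)
    fun u v ↦ ?_).continuous
  rw [Real.dist_eq, Real.coe_toNNReal _ (by positivity)]
  calc _ ≤ _ := abs_integral_abs_sub_le u v
    _ ≤ _ := integral_abs_le_mul_norm (u - v)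
    _ = _ := by rw [dist_eq_norm, neg_add_eq_sub, norm_sub_rev]

end MeasureTheory.Lp

lemma convexOn_norm_sq_comp_affineMap {E F : Type*} [NormedAddCommGroup E] [NormedSpace ℝ E]
    [NormedAddCommGroup F] [NormedSpace ℝ F] (g : E →ᵃ[ℝ] F) :
    ConvexOn ℝ univ fun x ↦ ‖g x‖ ^ 2 :=
  (convexOn_univ_norm.pow (fun x _ ↦ norm_nonneg x) 2).comp_affineMap g

theorem J_unique_minimizer_general
    (L : ℝ)
    (S : Lp ℝ 2 (volume.restrict (Ioo (0:ℝ) L)) →L[ℝ] Lp ℝ 2 (volume.restrict (Ioo (0:ℝ) L)))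
    (w_d f : Lp ℝ 2 (volume.restrict (Ioo (0:ℝ) L)))
    (ν η : ℝ) (hν : 0 < ν) (hη : 0 < η)
    (Uad : Set (Lp ℝ 2 (volume.restrict (Ioo (0:ℝ) L))))
    (hne : Uad.Nonempty) (hcl : IsClosed Uad) (hcv : Convex ℝ Uad) :
    ∃! u, u ∈ Uad ∧ ∀ v ∈ Uad,
      (1/2) * ‖S (f + u) - w_d‖^2 + (ν/2) * ‖u‖^2
          + (η/2) * ∫ x, |u x| ∂(volume.restrict (Ioo (0:ℝ) L)) ≤
        (1/2) * ‖S (f + v) - w_d‖^2 + (ν/2) * ‖v‖^2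
          + (η/2) * ∫ x, |v x| ∂(volume.restrict (Ioo (0:ℝ) L)) := by
  let μ := volume.restrict (Ioo (0:ℝ) L)
  set J : Lp ℝ 2 μ → ℝ := fun u ↦
    (1/2) * ‖S (f + u) - w_d‖^2 + (ν/2) * ‖u‖^2 + (η/2) * ∫ x, |u x| ∂μ
  let residual : Lp ℝ 2 μ →ᵃ[ℝ] Lp ℝ 2 μ :=
    S.toLinearMap.toAffineMap + AffineMap.const ℝ (Lp ℝ 2 μ) (S f - w_d)
  have hresidual : ∀ u, residual u = S (f + u) - w_d := fun u ↦ by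
    simp only [residual, AffineMap.coe_add, Pi.add_apply, LinearMap.coe_toAffineMap,
      ContinuousLinearMap.coe_coe, AffineMap.const_apply, map_add]
    abel
  have hconvex : ConvexOn ℝ univ fun u ↦ (1/2) * ‖residual u‖ ^ 2 + (η/2) * ∫ x, |u x| ∂μ :=
    ((convexOn_norm_sq_comp_affineMap residual).smul (by norm_num)).add
      (Lp.convexOn_integral_abs.smul (by positivity))
  have hJ : StrongConvexOn Uad ν J := by
    refine strongConvexOn_iff_convex.2 <| (hconvex.subset (subset_univ _) hcv).congr fun u _ ↦ ?_
    simp only [J, hresidual]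
    ring
  have hJc : Continuous J := by
    have := Lp.continuous_integral_abs (μ := μ) (p := 2)
    fun_prop
  have hJ0 : BddBelow (J '' Uad) := ⟨0, by rintro _ ⟨u, -, rfl⟩; positivity⟩
  exact hJ.existsUnique_isMinOn hν hne hcl (hJc.lowerSemicontinuous.lowerSemicontinuousOn _) hJ0

/-- minimizing `J(u) = ½‖S(f+u) − w_d‖² + (ν/2)‖u‖² + (η/2)‖u‖_{L¹}` over a
nonempty closed convex bounded subset `U_ad` of `L²(I)` has a unique solution. -/
theorem J_unique_minimizer
    (L : ℝ) (hL : 0 < L)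
    (S : Lp ℝ 2 (volume.restrict (Ioo (0:ℝ) L)) →L[ℝ] Lp ℝ 2 (volume.restrict (Ioo (0:ℝ) L)))
    (hS : Function.Injective S)
    (w_d f : Lp ℝ 2 (volume.restrict (Ioo (0:ℝ) L)))
    (ν η : ℝ) (hν : 0 < ν) (hη : 0 < η)
    (Uad : Set (Lp ℝ 2 (volume.restrict (Ioo (0:ℝ) L))))
    (hne : Uad.Nonempty) (hcl : IsClosed Uad) (hcv : Convex ℝ Uad)
    (hbd : Bornology.IsBounded Uad) :
    ∃! u, u ∈ Uad ∧ ∀ v ∈ Uad,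
      (1/2) * ‖S (f + u) - w_d‖^2 + (ν/2) * ‖u‖^2
          + (η/2) * ∫ x, |u x| ∂(volume.restrict (Ioo (0:ℝ) L)) ≤
        (1/2) * ‖S (f + v) - w_d‖^2 + (ν/2) * ‖v‖^2
          + (η/2) * ∫ x, |v x| ∂(volume.restrict (Ioo (0:ℝ) L)) :=
  J_unique_minimizer_general L S w_d f ν η hν hη Uad hne hcl hcv
end

section
/- Let ν > 0, η > 0 and a ≤ 0 ≤ b be real numbers. For u, μ ∈ ℝ, the conditions: (i) there exist λ, λ_a, λ_b ∈ ℝ with μ = λ + λ_b − λ_a, λ_b ≥ 0, b − u ≥ 0, λ_b(b−u) = 0, λ_a ≥ 0, u − a ≥ 0, λ_a(u−a) = 0, λ = η·sign(u) if u ≠ 0 and |λ| ≤ η if u = 0; are equivalent to (ii) C(u, μ) = 0, where C(u,μ) := νu − max(0, νu + μ − η) − min(0, νu + μ + η) + max(0, ν(u−b) + μ − η) + min(0, ν(u−a) + μ + η). -/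
/-- pointwise equivalence between the complementarity/subdifferential conditions
of the optimality system and the nonlinear complementarity (max/min) equation `C(u, μ) = 0`. -/
theorem complementarity_maxmin_equivalence
    (ν η a b u μ : ℝ) (hν : 0 < ν) (hη : 0 < η) (ha : a ≤ 0) (hb : 0 ≤ b) :
    (∃ lam lam_a lam_b : ℝ,
        μ = lam + lam_b - lam_a ∧
        0 ≤ lam_b ∧ 0 ≤ b - u ∧ lam_b * (b - u) = 0 ∧
        0 ≤ lam_a ∧ 0 ≤ u - a ∧ lam_a * (u - a) = 0 ∧
        (u ≠ 0 → lam = η * Real.sign u) ∧ (u = 0 → |lam| ≤ η)) ↔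
      ν * u - max 0 (ν * u + μ - η) - min 0 (ν * u + μ + η)
          + max 0 (ν * (u - b) + μ - η) + min 0 (ν * (u - a) + μ + η) = 0 := by
  have hνa : ν * a ≤ 0 := mul_nonpos_of_nonneg_of_nonpos hν.le ha
  have hνb : 0 ≤ ν * b := mul_nonneg hν.le hb
  constructor
  · rintro ⟨lam, la, lb, hmu, hlb, hbu, hlbc, hla, hua, hlac, hsign, hzero⟩
    rcases lt_trichotomy u 0 with hu | hu | hu
    · -- u < 0
      have hνu : ν * u < 0 := mul_neg_of_pos_of_neg hν hu
      have hl : lam = -η := by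
        rw [hsign hu.ne, Real.sign_of_neg hu]; ring
      have hlb0 : lb = 0 := by
        rcases mul_eq_zero.mp hlbc with h | h
        · exact h
        · linarith
      have hνua : 0 ≤ ν * (u - a) := mul_nonneg hν.le hua
      have hνub : ν * (u - b) ≤ 0 := mul_nonpos_of_nonneg_of_nonpos hν.le (by linarith)
      rcases mul_eq_zero.mp hlac with hla0 | hua0
      · have hμ : μ = -η := by rw [hmu, hl, hlb0, hla0]; ring
        rw [max_eq_left (by linarith : ν * u + μ - η ≤ 0),
          min_eq_right (by linarith : ν * u + μ + η ≤ 0),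
          max_eq_left (by linarith : ν * (u - b) + μ - η ≤ 0),
          min_eq_left (by linarith : (0:ℝ) ≤ ν * (u - a) + μ + η)]
        linarith
      · have hμ : μ + η ≤ 0 := by
          rw [hmu, hl, hlb0]; linarith
        have hνua0 : ν * (u - a) = 0 := by rw [hua0, mul_zero]
        rw [max_eq_left (by linarith : ν * u + μ - η ≤ 0),
          min_eq_right (by linarith : ν * u + μ + η ≤ 0),
          max_eq_left (by linarith : ν * (u - b) + μ - η ≤ 0),
          min_eq_right (by linarith : ν * (u - a) + μ + η ≤ 0)]
        linarith
    · -- u = 0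
      subst hu
      have habs := hzero rfl
      have h1 : -η ≤ lam := (abs_le.mp habs).1
      have h2 : lam ≤ η := (abs_le.mp habs).2
      rcases mul_eq_zero.mp hlbc with hlb0 | hb0
      · rcases mul_eq_zero.mp hlac with hla0 | ha0
        · -- lb = 0, la = 0 : μ = lam, |μ| ≤ η
          have hμ : μ = lam := by rw [hmu, hlb0, hla0]; ring
          rw [max_eq_left (by linarith : ν * 0 + μ - η ≤ 0),
            min_eq_left (by linarith : (0:ℝ) ≤ ν * 0 + μ + η),
            max_eq_left (by nlinarith : ν * (0 - b) + μ - η ≤ 0),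
            min_eq_left (by nlinarith : (0:ℝ) ≤ ν * (0 - a) + μ + η)]
          ring
        · -- lb = 0, a = 0
          have haz : a = 0 := by linarith
          have hμ : μ ≤ η := by rw [hmu, hlb0]; linarith
          subst haz
          have key : ν * ((0:ℝ) - 0) + μ + η = ν * 0 + μ + η := by ring
          rw [max_eq_left (by linarith : ν * 0 + μ - η ≤ 0),
            max_eq_left (by nlinarith : ν * ((0:ℝ) - b) + μ - η ≤ 0), key]
          ring
      · -- b = 0
        have hbz : b = 0 := by linarith
        subst hbz
        rcases mul_eq_zero.mp hlac with hla0 | ha0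
        · have hμ : -η ≤ μ := by rw [hmu, hla0]; linarith
          have key : ν * ((0:ℝ) - 0) + μ - η = ν * 0 + μ - η := by ring
          rw [min_eq_left (by linarith : (0:ℝ) ≤ ν * 0 + μ + η),
            min_eq_left (by nlinarith : (0:ℝ) ≤ ν * ((0:ℝ) - a) + μ + η), key]
          ring
        · have haz : a = 0 := by linarith
          subst haz
          have key1 : ν * ((0:ℝ) - 0) + μ - η = ν * 0 + μ - η := by ring
          have key2 : ν * ((0:ℝ) - 0) + μ + η = ν * 0 + μ + η := by ring
          rw [key1, key2]
          ring
    · -- 0 < u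
      have hνu : 0 < ν * u := mul_pos hν hu
      have hl : lam = η := by
        rw [hsign hu.ne', Real.sign_of_pos hu]; ring
      have hla0 : la = 0 := by
        rcases mul_eq_zero.mp hlac with h | h
        · exact h
        · linarith
      have hνua : 0 < ν * (u - a) := mul_pos hν (by linarith)
      have hνub : ν * (u - b) ≤ 0 := mul_nonpos_of_nonneg_of_nonpos hν.le (by linarith)
      rcases mul_eq_zero.mp hlbc with hlb0 | hub0
      · have hμ : μ = η := by rw [hmu, hl, hlb0, hla0]; ring
        rw [max_eq_right (by linarith : (0:ℝ) ≤ ν * u + μ - η),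
          min_eq_left (by linarith : (0:ℝ) ≤ ν * u + μ + η),
          max_eq_left (by linarith : ν * (u - b) + μ - η ≤ 0),
          min_eq_left (by linarith : (0:ℝ) ≤ ν * (u - a) + μ + η)]
        linarith
      · -- u = b
        have hμ : η ≤ μ := by rw [hmu, hl, hla0]; linarith
        have hνub0 : ν * (u - b) = 0 := by
          have : u - b = 0 := by linarith
          rw [this, mul_zero]
        rw [max_eq_right (by linarith : (0:ℝ) ≤ ν * u + μ - η),
          min_eq_left (by linarith : (0:ℝ) ≤ ν * u + μ + η),
          max_eq_right (by linarith : (0:ℝ) ≤ ν * (u - b) + μ - η),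
          min_eq_left (by linarith : (0:ℝ) ≤ ν * (u - a) + μ + η)]
        linarith
  · intro hC
    rcases le_total (ν * u + μ) (ν * a - η) with hE | hge4
    · -- Region E : u = a, μ ≤ -η
      rw [max_eq_left (by linarith : ν * u + μ - η ≤ 0),
        min_eq_right (by linarith : ν * u + μ + η ≤ 0),
        max_eq_left (by nlinarith : ν * (u - b) + μ - η ≤ 0),
        min_eq_right (by nlinarith : ν * (u - a) + μ + η ≤ 0)] at hC
      have hua : u = a := by
        have h0 : ν * (u - a) = 0 := by nlinarith
        have := mul_eq_zero.mp h0
        rcases this with h | h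
        · exact absurd h hν.ne'
        · linarith
      have hμ : μ ≤ -η := by nlinarith [hua]
      refine ⟨-η, -η - μ, 0, by ring, le_refl 0, by linarith, by rw [zero_mul],
        by linarith, by linarith, ?_, ?_, ?_⟩
      · have : u - a = 0 := by rw [hua]; ring
        rw [this, mul_zero]
      · intro hne
        have hun : u < 0 := lt_of_le_of_ne (hua ▸ ha) hne
        rw [Real.sign_of_neg hun]; ring
      · intro _
        rw [abs_neg, abs_of_pos hη]
    · rcases le_total (ν * u + μ) (-η) with hD | hge3
      · -- Region D : μ = -η, a ≤ u ≤ 0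
        rw [max_eq_left (by linarith : ν * u + μ - η ≤ 0),
          min_eq_right (by linarith : ν * u + μ + η ≤ 0),
          max_eq_left (by nlinarith : ν * (u - b) + μ - η ≤ 0),
          min_eq_left (by nlinarith : (0:ℝ) ≤ ν * (u - a) + μ + η)] at hC
        have hμ : μ = -η := by linarith
        have hνu : ν * u ≤ 0 := by linarith
        have hu0 : u ≤ 0 := by nlinarith
        have hau : a ≤ u := by nlinarith
        refine ⟨-η, 0, 0, by linarith, le_refl 0, by linarith, by rw [zero_mul],
          le_refl 0, by linarith, by rw [zero_mul], ?_, ?_⟩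
        · intro hne
          have hun : u < 0 := lt_of_le_of_ne hu0 hne
          rw [Real.sign_of_neg hun]; ring
        · intro _
          rw [abs_neg, abs_of_pos hη]
      · rcases le_total (ν * u + μ) η with hCm | hge2
        · -- Region C : u = 0, |μ| ≤ η
          rw [max_eq_left (by linarith : ν * u + μ - η ≤ 0),
            min_eq_left (by linarith : (0:ℝ) ≤ ν * u + μ + η),
            max_eq_left (by nlinarith : ν * (u - b) + μ - η ≤ 0),
            min_eq_left (by nlinarith : (0:ℝ) ≤ ν * (u - a) + μ + η)] at hC
          have hu0 : u = 0 := by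
            have h0 : ν * u = 0 := by linarith
            rcases mul_eq_zero.mp h0 with h | h
            · exact absurd h hν.ne'
            · exact h
          subst hu0
          refine ⟨μ, 0, 0, by ring, le_refl 0, by linarith, by rw [zero_mul],
            le_refl 0, by linarith, by rw [zero_mul], ?_, ?_⟩
          · intro hne; exact absurd rfl hne
          · intro _
            exact abs_le.mpr ⟨by linarith, by linarith⟩
        · rcases le_total (ν * u + μ) (η + ν * b) with hB | hA
          · -- Region B : μ = η, 0 ≤ u ≤ b
            rw [max_eq_right (by linarith : (0:ℝ) ≤ ν * u + μ - η),
              min_eq_left (by linarith : (0:ℝ) ≤ ν * u + μ + η),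
              max_eq_left (by nlinarith : ν * (u - b) + μ - η ≤ 0),
              min_eq_left (by nlinarith : (0:ℝ) ≤ ν * (u - a) + μ + η)] at hC
            have hμ : μ = η := by linarith
            have hνu : 0 ≤ ν * u := by linarith
            have hu0 : 0 ≤ u := by nlinarith
            have hub : u ≤ b := by nlinarith
            refine ⟨η, 0, 0, by linarith, le_refl 0, by linarith, by rw [zero_mul],
              le_refl 0, by linarith, by rw [zero_mul], ?_, ?_⟩
            · intro hne
              have hup : 0 < u := lt_of_le_of_ne hu0 (Ne.symm hne)
              rw [Real.sign_of_pos hup]; ring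
            · intro _
              rw [abs_of_pos hη]
          · -- Region A : u = b, η ≤ μ
            rw [max_eq_right (by nlinarith : (0:ℝ) ≤ ν * u + μ - η),
              min_eq_left (by nlinarith : (0:ℝ) ≤ ν * u + μ + η),
              max_eq_right (by nlinarith : (0:ℝ) ≤ ν * (u - b) + μ - η),
              min_eq_left (by nlinarith : (0:ℝ) ≤ ν * (u - a) + μ + η)] at hC
            have hub : u = b := by
              have h0 : ν * (u - b) = 0 := by linarith
              rcases mul_eq_zero.mp h0 with h | h
              · exact absurd h hν.ne'
              · linarith
            have hμ : η ≤ μ := by nlinarith [hub]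
            refine ⟨η, 0, μ - η, by ring, by linarith, by linarith, ?_,
              le_refl 0, by linarith, by rw [zero_mul], ?_, ?_⟩
            · have : b - u = 0 := by rw [hub]; ring
              rw [this, mul_zero]
            · intro hne
              have hup : 0 < u := lt_of_le_of_ne (hub ▸ hb) (Ne.symm hne)
              rw [Real.sign_of_pos hup]; ring
            · intro _
              rw [abs_of_pos hη]
end

section
/- Let ū minimize J(u) = ½‖S(f+u) − w_d‖² + (ν/2)‖u‖² + η‖u‖_{L¹} over U_ad, with p = S*(S(f+ū) − w_d) the adjoint state (so the variational inequality ⟨−p + νū + λ, v − ū⟩ ≥ 0 holds for all v ∈ U_ad with λ ∈ ∂(η‖·‖_{L¹})(ū)). Suppose u_a(x) < 0 < u_b(x) a.e. Then for a.e. x ∈ I with |p(x)| ≤ η, one has ū(x) = 0. -/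
open MeasureTheory Set

/-!
Test the variational inequality with the competitor that agrees with `ubar` where `|p| > η`
and vanishes where `|p| ≤ η`; it is admissible because `u_a ≤ 0 ≤ u_b`. On `{|p| ≤ η}` the
integrand `(-p + ν ubar + λ) ubar` equals `ν ubar² + η |ubar| - p ubar ≥ ν ubar² ≥ 0`, so the
inequality forces it to vanish a.e. there, and `ν > 0` gives `ubar = 0`.
-/

namespace Real

lemma mul_pos_of_abs_le_of_eq_mul_sign {p u l ν η : ℝ} (hν : 0 < ν) (hp : |p| ≤ η)
    (hu : u ≠ 0) (hl : l = η * sign u) : 0 < (-p + ν * u + l) * u := by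
  obtain ⟨hp₁, hp₂⟩ := abs_le.mp hp
  have hνu : 0 < ν * (u * u) := mul_pos hν (mul_self_pos.mpr hu)
  rcases hu.lt_or_gt with hneg | hpos
  · rw [hl, sign_of_neg hneg]
    nlinarith [mul_nonneg (neg_nonneg.2 hneg.le) (by linarith : 0 ≤ p + η)]
  · rw [hl, sign_of_pos hpos]
    nlinarith [mul_nonneg hpos.le (by linarith : 0 ≤ η - p)]

end Real

namespace MeasureTheory

variable {α : Type*} [MeasurableSpace α] {μ : Measure α}

lemma Lp.exists_ae_eq_indicator {E : Type*} [NormedAddCommGroup E] {p : ENNReal}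
    (u : Lp E p μ) {s : Set α} (hs : NullMeasurableSet s μ) :
    ∃ w : Lp E p μ, w =ᵐ[μ] s.indicator u := by
  have hmem : MemLp (s.indicator u) p μ :=
    (Lp.memLp u).of_le ((Lp.aestronglyMeasurable u).indicator₀ hs)
      (Filter.Eventually.of_forall fun x => norm_indicator_le_norm_self _ x)
  exact ⟨hmem.toLp _, hmem.coeFn_toLp⟩

lemma L2.real_inner_eq_integral (f g : Lp ℝ 2 μ) : inner ℝ f g = ∫ x, f x * g x ∂μ := by
  simp only [L2.inner_def, RCLike.inner_apply, conj_trivial, mul_comm]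

lemma ae_mul_eq_zero_of_variational_inequality {u_a u_b : α → ℝ}
    (hab : ∀ᵐ x ∂μ, u_a x ≤ 0 ∧ 0 ≤ u_b x) {q ubar : Lp ℝ 2 μ}
    (hubar : ∀ᵐ x ∂μ, u_a x ≤ ubar x ∧ ubar x ≤ u_b x) {s : Set α}
    (hs : NullMeasurableSet s μ) (hq : ∀ᵐ x ∂μ, x ∈ s → 0 ≤ q x * ubar x)
    (hVI : ∀ v : Lp ℝ 2 μ, (∀ᵐ x ∂μ, u_a x ≤ v x ∧ v x ≤ u_b x) → 0 ≤ inner ℝ q (v - ubar)) :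
    ∀ᵐ x ∂μ, x ∈ s → q x * ubar x = 0 := by
  obtain ⟨w, hw⟩ := Lp.exists_ae_eq_indicator ubar hs
  have hv : ∀ᵐ x ∂μ, u_a x ≤ (ubar - w) x ∧ (ubar - w) x ≤ u_b x := by
    filter_upwards [Lp.coeFn_sub ubar w, hw, hab, hubar] with x hsub hwx habx hubarx
    rw [hsub, Pi.sub_apply, hwx]
    by_cases hx : x ∈ s
    · simpa [indicator_of_mem hx] using habx
    · simpa [indicator_of_notMem hx] using hubarx
  have hnonneg : 0 ≤ᵐ[μ] fun x => q x * w x := by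
    filter_upwards [hw, hq] with x hwx hqx
    by_cases hx : x ∈ s
    · simpa [hwx, indicator_of_mem hx] using hqx hx
    · simp [hwx, indicator_of_notMem hx]
  have hint_nonpos : ∫ x, q x * w x ∂μ ≤ 0 := by
    have := hVI _ hv
    rwa [sub_sub_cancel_left, inner_neg_right, neg_nonneg, L2.real_inner_eq_integral] at this
  have hzero : (fun x => q x * w x) =ᵐ[μ] 0 :=
    (integral_eq_zero_iff_of_nonneg_ae hnonneg ((Lp.memLp q).integrable_mul (Lp.memLp w))).1
      (le_antisymm hint_nonpos (integral_nonneg_of_ae hnonneg))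
  filter_upwards [hzero, hw] with x hx hwx hxs
  simpa [hwx, indicator_of_mem hxs] using hx

end MeasureTheory

theorem sparsity_of_optimal_control_general
    (L : ℝ) (ν η : ℝ) (hν : 0 < ν)
    (u_a u_b : ℝ → ℝ)
    (hab : ∀ᵐ x ∂(volume.restrict (Ioo (0:ℝ) L)), u_a x < 0 ∧ 0 < u_b x)
    (Uad : Set (Lp ℝ 2 (volume.restrict (Ioo (0:ℝ) L))))
    (hUad : Uad = {u : Lp ℝ 2 (volume.restrict (Ioo (0:ℝ) L)) |
      ∀ᵐ x ∂(volume.restrict (Ioo (0:ℝ) L)), u_a x ≤ u x ∧ u x ≤ u_b x})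
    (ubar p lam : Lp ℝ 2 (volume.restrict (Ioo (0:ℝ) L)))
    (hubar : ubar ∈ Uad)
    (hlam : ∀ᵐ x ∂(volume.restrict (Ioo (0:ℝ) L)),
      (ubar x ≠ 0 → lam x = η * Real.sign (ubar x)) ∧ (ubar x = 0 → |lam x| ≤ η))
    (hVI : ∀ v ∈ Uad, (0:ℝ) ≤ inner ℝ (-p + ν • ubar + lam) (v - ubar)) :
    ∀ᵐ x ∂(volume.restrict (Ioo (0:ℝ) L)), |p x| ≤ η → ubar x = 0 := by
  subst hUad
  have hq : ⇑(-p + ν • ubar + lam) =ᵐ[volume.restrict (Ioo (0:ℝ) L)]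
      fun x => -p x + ν * ubar x + lam x := by
    filter_upwards [Lp.coeFn_add (-p + ν • ubar) lam, Lp.coeFn_add (-p) (ν • ubar),
      Lp.coeFn_neg p, Lp.coeFn_smul ν ubar] with x h₁ h₂ h₃ h₄
    simp only [h₁, Pi.add_apply, h₂, h₃, h₄, Pi.neg_apply, Pi.smul_apply, smul_eq_mul]
  have hs : NullMeasurableSet {x | |p x| ≤ η} (volume.restrict (Ioo (0:ℝ) L)) :=
    (Lp.aestronglyMeasurable p).norm.nullMeasurableSet_le aestronglyMeasurable_const
  have hpos : ∀ᵐ x ∂(volume.restrict (Ioo (0:ℝ) L)),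
      |p x| ≤ η → ubar x ≠ 0 → 0 < (-p + ν • ubar + lam) x * ubar x := by
    filter_upwards [hq, hlam] with x hqx hlx hpx hu
    exact hqx ▸ Real.mul_pos_of_abs_le_of_eq_mul_sign hν hpx hu (hlx.1 hu)
  have hnonneg : ∀ᵐ x ∂(volume.restrict (Ioo (0:ℝ) L)),
      |p x| ≤ η → 0 ≤ (-p + ν • ubar + lam) x * ubar x := by
    filter_upwards [hpos] with x hx hpx
    rcases eq_or_ne (ubar x) 0 with hu | hu
    · simp [hu]
    · exact (hx hpx hu).le
  have hzero := ae_mul_eq_zero_of_variational_inequality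
    (hab.mono fun x hx => ⟨hx.1.le, hx.2.le⟩) hubar hs hnonneg hVI
  filter_upwards [hzero, hpos] with x hx hposx hpx
  by_contra hu
  exact (hposx hpx hu).ne' (hx hpx)

/-- sparsity of the optimal control: if `ubar` minimizes
`J(u) = ½‖S(f+u) − w_d‖² + (ν/2)‖u‖² + η‖u‖_{L¹}` over `U_ad`, with adjoint state
`p = S*(S(f+ubar) − w_d)` and subgradient `λ ∈ ∂(η‖·‖₁)(ubar)` satisfying the variational
inequality, and `u_a < 0 < u_b` a.e., then `ubar = 0` a.e. on `{|p| ≤ η}`. -/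
theorem sparsity_of_optimal_control
    (L : ℝ) (hL : 0 < L)
    (S : Lp ℝ 2 (volume.restrict (Ioo (0:ℝ) L)) →L[ℝ] Lp ℝ 2 (volume.restrict (Ioo (0:ℝ) L)))
    (hS : Function.Injective S)
    (w_d f : Lp ℝ 2 (volume.restrict (Ioo (0:ℝ) L)))
    (ν η : ℝ) (hν : 0 < ν) (hη : 0 < η)
    (u_a u_b : ℝ → ℝ)
    (hab : ∀ᵐ x ∂(volume.restrict (Ioo (0:ℝ) L)), u_a x < 0 ∧ 0 < u_b x)
    (Uad : Set (Lp ℝ 2 (volume.restrict (Ioo (0:ℝ) L))))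
    (hUad : Uad = {u : Lp ℝ 2 (volume.restrict (Ioo (0:ℝ) L)) |
      ∀ᵐ x ∂(volume.restrict (Ioo (0:ℝ) L)), u_a x ≤ u x ∧ u x ≤ u_b x})
    (ubar p lam : Lp ℝ 2 (volume.restrict (Ioo (0:ℝ) L)))
    (hubar : ubar ∈ Uad)
    (hmin : ∀ v ∈ Uad,
      (1/2) * ‖S (f + ubar) - w_d‖^2 + (ν/2) * ‖ubar‖^2
          + η * ∫ x, |ubar x| ∂(volume.restrict (Ioo (0:ℝ) L)) ≤
        (1/2) * ‖S (f + v) - w_d‖^2 + (ν/2) * ‖v‖^2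
          + η * ∫ x, |v x| ∂(volume.restrict (Ioo (0:ℝ) L)))
    (hp : p = ContinuousLinearMap.adjoint S (S (f + ubar) - w_d))
    (hlam : ∀ᵐ x ∂(volume.restrict (Ioo (0:ℝ) L)),
      (ubar x ≠ 0 → lam x = η * Real.sign (ubar x)) ∧ (ubar x = 0 → |lam x| ≤ η))
    (hVI : ∀ v ∈ Uad, (0:ℝ) ≤ inner ℝ (-p + ν • ubar + lam) (v - ubar)) :
    ∀ᵐ x ∂(volume.restrict (Ioo (0:ℝ) L)), |p x| ≤ η → ubar x = 0 :=
  sparsity_of_optimal_control_general L ν η hν u_a u_b hab Uad hUad ubar p lam hubar hlam hVI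
end

section
/- Let H be a real Hilbert space, ν > 0, and suppose ū, ū_h ∈ H satisfy the variational inequalities ⟨−p + νū + λ, v − ū⟩ ≥ 0 for all v ∈ C, and ⟨−p_h + νū_h + λ_h, v_h − ū_h⟩ ≥ 0 for all v_h ∈ C_h, where λ ∈ ∂G(ū) and λ_h ∈ ∂G(ū_h) for a convex functional G : H → ℝ. Then for any ũ ∈ C and ũ_h ∈ C_h: ν‖ū − ū_h‖² ≤ ⟨νū_h − p_h, ũ_h − ū⟩ + ⟨νū − p, ũ − ū_h⟩ − ⟨p_h − p, ū − ū_h⟩ + G(ũ) − G(ū_h) + G(ũ_h) − G(ū). -/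
open RealInnerProductSpace

/-- the key abstract inequality obtained by testing the continuous and discrete
variational inequalities with `utilde_h ∈ C_h` and `utilde ∈ C` and using the subgradient
inequality for the convex functional `G`. -/
theorem abstract_error_inequality
    {H : Type*} [NormedAddCommGroup H] [InnerProductSpace ℝ H]
    (ν : ℝ) (hν : 0 < ν) (G : H → ℝ) (hG : ConvexOn ℝ Set.univ G)
    (C Ch : Set H) (p ph lam lamh ubar ubarh : H)
    (hubar : ubar ∈ C) (hubarh : ubarh ∈ Ch)
    (hlam : ∀ v : H, G ubar + ⟪lam, v - ubar⟫ ≤ G v)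
    (hlamh : ∀ v : H, G ubarh + ⟪lamh, v - ubarh⟫ ≤ G v)
    (hVI : ∀ v ∈ C, 0 ≤ ⟪-p + ν • ubar + lam, v - ubar⟫)
    (hVIh : ∀ vh ∈ Ch, 0 ≤ ⟪-ph + ν • ubarh + lamh, vh - ubarh⟫) :
    ∀ utilde ∈ C, ∀ utildeh ∈ Ch,
      ν * ‖ubar - ubarh‖^2 ≤
        ⟪ν • ubarh - ph, utildeh - ubar⟫ + ⟪ν • ubar - p, utilde - ubarh⟫
          - ⟪ph - p, ubar - ubarh⟫
          + (G utilde - G ubarh) + (G utildeh - G ubar) := by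
  intro ut hut uth huth
  have h1 := hVI ut hut
  have h2 := hVIh uth huth
  have s1 := hlam ut
  have s2 := hlamh uth
  have hn : ‖ubar - ubarh‖^2 = ⟪ubar - ubarh, ubar - ubarh⟫ :=
    (real_inner_self_eq_norm_sq _).symm
  simp only [inner_sub_left, inner_sub_right, inner_add_left, inner_neg_left,
    real_inner_smul_left] at s1 s2 h1 h2 hn ⊢
  have c1 := real_inner_comm ubar ubarh
  have c2 := real_inner_comm ubar ut
  have c3 := real_inner_comm ubarh uth
  have c4 := real_inner_comm p ubar
  have c5 := real_inner_comm ph ubarh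
  nlinarith [hν.le]
end

section
/- Let ν > 0, η ≥ 0 and denote by ū_η the unique minimizer over U_ad of J_η(u) = ½‖S(f+u) − w_d‖² + (ν/2)‖u‖² + η‖u‖_{L¹}. If 0 ∈ U_ad and η ≥ ‖S*(S f − w_d)‖_{L^∞(I)}, then ū_η = 0. -/
open MeasureTheory Set RealInnerProductSpace

/-!
Testing the optimality of `ū` against the admissible control `0` gives
`⟪p, ū⟫ + ½‖Sū‖² + (ν/2)‖ū‖² + η‖ū‖_{L¹} ≤ 0` with `p = S*(Sf − w_d)` the adjoint state at `0`.
Since `|p| ≤ η` a.e., `|⟪p, ū⟫| ≤ η‖ū‖_{L¹}`, so `(ν/2)‖ū‖² ≤ 0`.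
-/

section TrackingCost

variable {E F : Type*} [NormedAddCommGroup E] [InnerProductSpace ℝ E]
  [NormedAddCommGroup F] [InnerProductSpace ℝ F]

noncomputable def trackingCost (S : E →L[ℝ] F) (f : E) (w_d : F) (ν : ℝ) (R : E → ℝ) (u : E) :
    ℝ :=
  (1/2) * ‖S (f + u) - w_d‖^2 + (ν/2) * ‖u‖^2 + R u

theorem trackingCost_zero (S : E →L[ℝ] F) (f : E) (w_d : F) (ν : ℝ) {R : E → ℝ}
    (hR : R 0 = 0) : trackingCost S f w_d ν R 0 = (1/2) * ‖S f - w_d‖^2 := by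
  simp [trackingCost, hR]

theorem eq_zero_of_trackingCost_le_trackingCost_zero [CompleteSpace E] [CompleteSpace F]
    (S : E →L[ℝ] F) (f : E) (w_d : F) {ν : ℝ} (hν : 0 < ν) {R : E → ℝ} (hR0 : R 0 = 0) {u : E}
    (hR : -R u ≤ ⟪ContinuousLinearMap.adjoint S (S f - w_d), u⟫)
    (hle : trackingCost S f w_d ν R u ≤ trackingCost S f w_d ν R 0) : u = 0 := by
  have hexpand : ‖S (f + u) - w_d‖^2 = ‖S f - w_d‖^2 + 2 * ⟪S f - w_d, S u⟫ + ‖S u‖^2 := by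
    rw [map_add, add_sub_right_comm, norm_add_sq_real]
  rw [trackingCost_zero S f w_d ν hR0, trackingCost, hexpand,
    ← ContinuousLinearMap.adjoint_inner_left] at hle
  have hu : ‖u‖^2 ≤ 0 := by nlinarith [sq_nonneg ‖S u‖]
  exact norm_eq_zero.mp (pow_eq_zero_iff two_ne_zero |>.mp (le_antisymm hu (sq_nonneg _)))

end TrackingCost

theorem Lp.integral_abs_zero {α : Type*} [MeasurableSpace α] {μ : Measure α} {p : ENNReal} :
    ∫ x, |(0 : Lp ℝ p μ) x| ∂μ = 0 :=
  integral_eq_zero_of_ae <| (Lp.coeFn_zero ℝ p μ).mono fun x hx => by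
    simp only [hx, Pi.zero_apply, abs_zero]

theorem L2.abs_inner_le_mul_integral_abs {α : Type*} [MeasurableSpace α] {μ : Measure α}
    [IsFiniteMeasure μ] (p u : Lp ℝ 2 μ) {η : ℝ} (hp : ∀ᵐ x ∂μ, |p x| ≤ η) :
    |⟪p, u⟫| ≤ η * ∫ x, |u x| ∂μ := by
  have hinner : ⟪p, u⟫ = ∫ x, p x * u x ∂μ := by
    simp only [L2.inner_def, RCLike.inner_apply, conj_trivial, mul_comm]
  have hpu : Integrable (fun x => p x * u x) μ := by
    simpa [RCLike.inner_apply, mul_comm] using L2.integrable_inner (𝕜 := ℝ) p u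
  have hu : Integrable (fun x => |u x|) μ := ((Lp.memLp u).integrable (by norm_num)).abs
  rw [hinner, ← integral_const_mul]
  calc |∫ x, p x * u x ∂μ| ≤ ∫ x, |p x * u x| ∂μ := abs_integral_le_integral_abs
    _ ≤ ∫ x, η * |u x| ∂μ := by
      refine integral_mono_ae hpu.abs (hu.const_mul η) ?_
      filter_upwards [hp] with x hx
      rw [abs_mul]
      exact mul_le_mul_of_nonneg_right hx (abs_nonneg _)

theorem sparse_control_vanishes_for_large_eta_general
    (L : ℝ)
    (S : Lp ℝ 2 (volume.restrict (Ioo (0:ℝ) L)) →L[ℝ] Lp ℝ 2 (volume.restrict (Ioo (0:ℝ) L)))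
    (w_d f : Lp ℝ 2 (volume.restrict (Ioo (0:ℝ) L)))
    (ν η : ℝ) (hν : 0 < ν)
    (Uad : Set (Lp ℝ 2 (volume.restrict (Ioo (0:ℝ) L))))
    (h0 : 0 ∈ Uad)
    (hbound : ∀ᵐ x ∂(volume.restrict (Ioo (0:ℝ) L)),
      |(ContinuousLinearMap.adjoint S (S f - w_d)) x| ≤ η)
    (ubar : Lp ℝ 2 (volume.restrict (Ioo (0:ℝ) L)))
    (hmin : ∀ v ∈ Uad,
      (1/2) * ‖S (f + ubar) - w_d‖^2 + (ν/2) * ‖ubar‖^2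
          + η * ∫ x, |ubar x| ∂(volume.restrict (Ioo (0:ℝ) L)) ≤
        (1/2) * ‖S (f + v) - w_d‖^2 + (ν/2) * ‖v‖^2
          + η * ∫ x, |v x| ∂(volume.restrict (Ioo (0:ℝ) L))) :
    ubar = 0 := by
  have hR0 : η * ∫ x, |(0 : Lp ℝ 2 (volume.restrict (Ioo (0:ℝ) L))) x|
      ∂(volume.restrict (Ioo (0:ℝ) L)) = 0 := by
    rw [Lp.integral_abs_zero, mul_zero]
  have hR := L2.abs_inner_le_mul_integral_abs _ ubar hbound
  exact eq_zero_of_trackingCost_le_trackingCost_zero S f w_d hν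
    (R := fun u => η * ∫ x, |u x| ∂_) hR0
    (abs_le.mp hR).1 (hmin 0 h0)

/-- if `0 ∈ U_ad` and `η ≥ ‖S*(Sf − w_d)‖_{L^∞(I)}` (encoded as
`|S*(Sf − w_d)(x)| ≤ η` a.e.), then the unique minimizer of
`J_η(u) = ½‖S(f+u) − w_d‖² + (ν/2)‖u‖² + η‖u‖_{L¹}` over `U_ad` is `ū_η = 0`. -/
theorem sparse_control_vanishes_for_large_eta
    (L : ℝ) (hL : 0 < L)
    (S : Lp ℝ 2 (volume.restrict (Ioo (0:ℝ) L)) →L[ℝ] Lp ℝ 2 (volume.restrict (Ioo (0:ℝ) L)))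
    (hS : Function.Injective S)
    (w_d f : Lp ℝ 2 (volume.restrict (Ioo (0:ℝ) L)))
    (ν η : ℝ) (hν : 0 < ν) (hη : 0 ≤ η)
    (Uad : Set (Lp ℝ 2 (volume.restrict (Ioo (0:ℝ) L))))
    (hcl : IsClosed Uad) (hcv : Convex ℝ Uad) (h0 : 0 ∈ Uad)
    (hbound : ∀ᵐ x ∂(volume.restrict (Ioo (0:ℝ) L)),
      |(ContinuousLinearMap.adjoint S (S f - w_d)) x| ≤ η)
    (ubar : Lp ℝ 2 (volume.restrict (Ioo (0:ℝ) L)))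
    (hubar : ubar ∈ Uad)
    (hmin : ∀ v ∈ Uad,
      (1/2) * ‖S (f + ubar) - w_d‖^2 + (ν/2) * ‖ubar‖^2
          + η * ∫ x, |ubar x| ∂(volume.restrict (Ioo (0:ℝ) L)) ≤
        (1/2) * ‖S (f + v) - w_d‖^2 + (ν/2) * ‖v‖^2
          + η * ∫ x, |v x| ∂(volume.restrict (Ioo (0:ℝ) L))) :
    ubar = 0 :=
  sparse_control_vanishes_for_large_eta_general L S w_d f ν η hν Uad h0 hbound ubar hmin
end
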